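/- Electron density conservation: if d : ℝ → M₄(ℂ) is a self-consistent trajectory, then the electron density Tr(d(t)·(n↑+n↓)) is independent of t ∈ ℝ, is a real number, and lies in the interval [0,2]. -/

import Mathlib

/-! The number operator `N = n↑ + n↓` counts particles: `⁅N, Aₛ*⁆ = Aₛ*` and `⁅N, Aₛ⁆ = -Aₛ`.
Hence `N` commutes with the particle-conserving part of `dh(c)`, and only the pairing term
survives: `⁅N, dh(c)⁆ = 2γ (c̄ A↓A↑ - c A↑*A↓*)`. Along a trajectory
`d/dt Tr(d N) = -i Tr(d ⁅N, dh(c)⁆)`, and since `c = Tr(d A↓A↑)` and, `d` being Hermitian,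
`Tr(d A↑*A↓*) = c̄`, this is `-2iγ (c̄ c - c c̄) = 0`.
The bounds come from `Tr(d Aₛ*Aₛ) = Tr(Aₛ d Aₛ*) ≥ 0` and
`2 - Tr(d N) = Tr(d A↑A↑*) + Tr(d A↓A↓*) ≥ 0`. -/

open Matrix
open scoped ComplexOrder

noncomputable section

/-- `M₄(ℂ)`, the algebra of 4×4 complex matrices, identified with the linear
operators on the one-site fermionic Fock space `ℂ⁴`. -/
abbrev M4 : Type := Matrix (Fin 4) (Fin 4) ℂ

noncomputable instance : NormedAddCommGroup M4 := Matrix.normedAddCommGroup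
noncomputable instance : NormedSpace ℝ M4 := Matrix.normedSpace

/-- The canonical anticommutation relations for the two matrices `A↑ = Aup`,
`A↓ = Adn`: `Aₛ·Aₜ + Aₜ·Aₛ = 0` and `Aₛ·Aₜ* + Aₜ*·Aₛ = δ_{s,t}·1` for
`s, t ∈ {↑,↓}`. -/
def CAR (Aup Adn : M4) : Prop :=
  Aup * Aup + Aup * Aup = 0 ∧
  Aup * Adn + Adn * Aup = 0 ∧
  Adn * Adn + Adn * Adn = 0 ∧
  Aup * Aupᴴ + Aupᴴ * Aup = 1 ∧
  Aup * Adnᴴ + Adnᴴ * Aup = 0 ∧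
  Adn * Aupᴴ + Aupᴴ * Adn = 0 ∧
  Adn * Adnᴴ + Adnᴴ * Adn = 1

/-- `dh(c) := 2λ n↑n↓ − μ(n↑+n↓) − h(n↑−n↓) − γ(c·A↑*A↓* + c̄·A↓A↑)`,
where `nₛ := Aₛ*·Aₛ`. -/
def dh (Aup Adn : M4) (mu h lam gam : ℝ) (c : ℂ) : M4 :=
  (2 * lam : ℂ) • (Aupᴴ * Aup * (Adnᴴ * Adn))
    - (mu : ℂ) • (Aupᴴ * Aup + Adnᴴ * Adn)
    - (h : ℂ) • (Aupᴴ * Aup - Adnᴴ * Adn)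
    - (gam : ℂ) • (c • (Aupᴴ * Adnᴴ) + (starRingEnd ℂ c) • (Adn * Aup))

/-- A density matrix: Hermitian, positive semidefinite, of trace 1. -/
def IsDensityMatrix (d : M4) : Prop :=
  d.IsHermitian ∧ d.PosSemidef ∧ d.trace = 1

/-- A self-consistent trajectory: a differentiable map `d : ℝ → M₄(ℂ)` such that
`d t` is a density matrix for all `t` and
`d′(t) = −i·[dh(Tr(d(t)·A↓A↑)), d(t)]` for all `t ∈ ℝ`. -/
def SelfConsistent (Aup Adn : M4) (mu h lam gam : ℝ) (d : ℝ → M4) : Prop :=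
  (∀ t : ℝ, IsDensityMatrix (d t)) ∧
  ∀ t : ℝ, HasDerivAt d
      ((-Complex.I) •
        (dh Aup Adn mu h lam gam ((d t * (Adn * Aup)).trace) * d t
          - d t * dh Aup Adn mu h lam gam ((d t * (Adn * Aup)).trace))) t

namespace Matrix

variable {n : Type*} [Fintype n]

theorem trace_lie_mul {R : Type*} [CommRing R] (A B C : Matrix n n R) :
    (⁅A, B⁆ * C).trace = (B * ⁅C, A⁆).trace := by
  simp only [Ring.lie_def, Matrix.sub_mul, Matrix.mul_sub, trace_sub, Matrix.mul_assoc]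
  rw [trace_mul_comm A, Matrix.mul_assoc]

theorem IsHermitian.trace_mul_conjTranspose {R : Type*} [CommRing R] [StarRing R]
    {A : Matrix n n R} (hA : A.IsHermitian) (B : Matrix n n R) :
    (A * Bᴴ).trace = star (A * B).trace := by
  rw [← trace_conjTranspose, conjTranspose_mul, hA.eq, trace_mul_comm]

theorem PosSemidef.trace_mul_conjTranspose_mul_self_nonneg {𝕜 : Type*} [RCLike 𝕜]
    {A : Matrix n n 𝕜} (hA : A.PosSemidef) (B : Matrix n n 𝕜) :
    0 ≤ (A * (Bᴴ * B)).trace := by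
  rw [← Matrix.mul_assoc, trace_mul_cycle]
  exact (hA.mul_mul_conjTranspose_same B).trace_nonneg

end Matrix

theorem Ring.lie_mul_right {R : Type*} [Ring R] (x y z : R) :
    ⁅x, y * z⁆ = ⁅x, y⁆ * z + y * ⁅x, z⁆ := by
  simp only [Ring.lie_def]
  noncomm_ring

section FermionMode

variable {R : Type*} [Ring R] [StarRing R] {a b : R}

theorem lie_star_mul_self_star (ha : a * a = 0) (hcar : a * star a + star a * a = 1) :
    ⁅star a * a, star a⁆ = star a := by
  have ha' : star a * star a = 0 := by rw [← star_mul, ha, star_zero]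
  calc ⁅star a * a, star a⁆ = star a * (a * star a + star a * a) - 2 * (star a * star a) * a := by
        rw [Ring.lie_def]; noncomm_ring
    _ = star a := by rw [hcar, ha', mul_one, mul_zero, zero_mul, sub_zero]

theorem lie_star_mul_self_self (ha : a * a = 0) (hcar : a * star a + star a * a = 1) :
    ⁅star a * a, a⁆ = -a := by
  calc ⁅star a * a, a⁆ = 2 * star a * (a * a) - (a * star a + star a * a) * a := by
        rw [Ring.lie_def]; noncomm_ring
    _ = -a := by rw [hcar, ha, mul_zero, one_mul, zero_sub]

theorem lie_star_mul_self_of_anticomm (h : a * b + b * a = 0)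
    (h' : star a * b + b * star a = 0) : ⁅star a * a, b⁆ = 0 := by
  calc ⁅star a * a, b⁆ = star a * (a * b + b * a) - (star a * b + b * star a) * a := by
        rw [Ring.lie_def]; noncomm_ring
    _ = 0 := by rw [h, h', mul_zero, zero_mul, sub_zero]

end FermionMode

def numberOp (Aup Adn : M4) : M4 := Aupᴴ * Aup + Adnᴴ * Adn

theorem numberOp_comm (Aup Adn : M4) : numberOp Adn Aup = numberOp Aup Adn :=
  add_comm _ _

theorem HasDerivAt.trace_mul_const {d : ℝ → M4} {d' : M4} {t : ℝ} (hd : HasDerivAt d d' t)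
    (N : M4) : HasDerivAt (fun s ↦ (d s * N).trace) (d' * N).trace t := by
  let L : M4 →L[ℝ] ℂ := LinearMap.toContinuousLinearMap
    (((traceLinearMap (Fin 4) ℂ ℂ).comp (LinearMap.mulRight ℂ N)).restrictScalars ℝ)
  exact L.hasFDerivAt.comp_hasDerivAt t hd

theorem trace_mul_numberOp_nonneg {Aup Adn d : M4} (hd : d.PosSemidef) :
    0 ≤ (d * numberOp Aup Adn).trace := by
  rw [numberOp, Matrix.mul_add, trace_add]
  exact add_nonneg (hd.trace_mul_conjTranspose_mul_self_nonneg Aup)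
    (hd.trace_mul_conjTranspose_mul_self_nonneg Adn)

attribute [local instance] LieRing.ofAssociativeRing

namespace CAR

variable {Aup Adn : M4}

theorem symm (hCAR : CAR Aup Adn) : CAR Adn Aup := by
  obtain ⟨h1, h2, h3, h4, h5, h6, h7⟩ := hCAR
  exact ⟨h3, by rwa [add_comm], h1, h7, h6, h5, h4⟩

theorem mul_self_eq_zero (hCAR : CAR Aup Adn) : Aup * Aup = 0 := by
  have h : (2 : ℂ) • (Aup * Aup) = 0 := by rw [two_smul]; exact hCAR.1
  exact (smul_eq_zero.mp h).resolve_left two_ne_zero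

theorem lie_numberOp_conjTranspose (hCAR : CAR Aup Adn) :
    ⁅numberOp Aup Adn, Aupᴴ⁆ = Aupᴴ := by
  have h0 := hCAR.mul_self_eq_zero
  obtain ⟨-, h2, -, h4, -, h6, -⟩ := hCAR
  have h2' : Adnᴴ * Aupᴴ + Aupᴴ * Adnᴴ = 0 := by
    simpa only [conjTranspose_add, conjTranspose_mul, conjTranspose_zero] using
      congrArg conjTranspose h2
  have hup : ⁅Aupᴴ * Aup, Aupᴴ⁆ = Aupᴴ := lie_star_mul_self_star h0 h4
  have hdn : ⁅Adnᴴ * Adn, Aupᴴ⁆ = 0 := lie_star_mul_self_of_anticomm h6 h2'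
  rw [numberOp, add_lie, hup, hdn, add_zero]

theorem lie_numberOp (hCAR : CAR Aup Adn) : ⁅numberOp Aup Adn, Aup⁆ = -Aup := by
  have h0 := hCAR.mul_self_eq_zero
  obtain ⟨-, h2, -, h4, h5, -, -⟩ := hCAR
  have h2' : Adn * Aup + Aup * Adn = 0 := by rwa [add_comm]
  have h5' : Adnᴴ * Aup + Aup * Adnᴴ = 0 := by rwa [add_comm]
  have hup : ⁅Aupᴴ * Aup, Aup⁆ = -Aup := lie_star_mul_self_self h0 h4
  have hdn : ⁅Adnᴴ * Adn, Aup⁆ = 0 := lie_star_mul_self_of_anticomm h2' h5'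
  rw [numberOp, add_lie, hup, hdn, add_zero]

theorem lie_numberOp_dh (hCAR : CAR Aup Adn) (mu h lam gam : ℝ) (c : ℂ) :
    ⁅numberOp Aup Adn, dh Aup Adn mu h lam gam c⁆
      = (2 * gam * starRingEnd ℂ c : ℂ) • (Adn * Aup) - (2 * gam * c : ℂ) • (Aupᴴ * Adnᴴ) := by
  have hup := hCAR.lie_numberOp
  have hup' := hCAR.lie_numberOp_conjTranspose
  have hdn : ⁅numberOp Aup Adn, Adn⁆ = -Adn := numberOp_comm Aup Adn ▸ hCAR.symm.lie_numberOp
  have hdn' : ⁅numberOp Aup Adn, Adnᴴ⁆ = Adnᴴ :=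
    numberOp_comm Aup Adn ▸ hCAR.symm.lie_numberOp_conjTranspose
  simp only [dh, lie_sub, lie_add, lie_smul, Ring.lie_mul_right, hup, hup', hdn, hdn',
    mul_neg, neg_mul, add_neg_cancel, zero_mul, mul_zero, smul_zero, sub_zero]
  module

theorem trace_mul_lie_numberOp_dh_eq_zero (hCAR : CAR Aup Adn) (mu h lam gam : ℝ) {d : M4}
    (hd : d.IsHermitian) :
    (d * ⁅numberOp Aup Adn, dh Aup Adn mu h lam gam (d * (Adn * Aup)).trace⁆).trace = 0 := by
  set c := (d * (Adn * Aup)).trace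
  have hc : (d * (Aupᴴ * Adnᴴ)).trace = starRingEnd ℂ c := by
    rw [← conjTranspose_mul, hd.trace_mul_conjTranspose, Complex.star_def]
  rw [hCAR.lie_numberOp_dh, Matrix.mul_sub, Matrix.mul_smul, Matrix.mul_smul, trace_sub,
    trace_smul, trace_smul, hc, smul_eq_mul, smul_eq_mul]
  ring

theorem hasDerivAt_trace_mul_numberOp (hCAR : CAR Aup Adn) {mu h lam gam : ℝ} {d : ℝ → M4}
    (hd : SelfConsistent Aup Adn mu h lam gam d) (t : ℝ) :
    HasDerivAt (fun s ↦ (d s * numberOp Aup Adn).trace) 0 t := by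
  convert (hd.2 t).trace_mul_const (numberOp Aup Adn) using 1
  rw [← Ring.lie_def, smul_mul_assoc, trace_smul, trace_lie_mul,
    hCAR.trace_mul_lie_numberOp_dh_eq_zero mu h lam gam (hd.1 t).1, smul_zero]

theorem trace_mul_numberOp_le_two (hCAR : CAR Aup Adn) {d : M4} (hd : IsDensityMatrix d) :
    (d * numberOp Aup Adn).trace ≤ 2 := by
  have hholes : (2 : ℂ) - (d * numberOp Aup Adn).trace
      = (d * (Aup * Aupᴴ)).trace + (d * (Adn * Adnᴴ)).trace := by
    rw [eq_sub_of_add_eq hCAR.2.2.2.1, eq_sub_of_add_eq hCAR.2.2.2.2.2.2, numberOp]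
    simp only [Matrix.mul_add, Matrix.mul_sub, Matrix.mul_one, trace_add, trace_sub, hd.2.2]
    ring
  have hnonneg : 0 ≤ (d * (Aup * Aupᴴ)).trace + (d * (Adn * Adnᴴ)).trace := by
    simpa only [conjTranspose_conjTranspose] using
      add_nonneg (hd.2.1.trace_mul_conjTranspose_mul_self_nonneg Aupᴴ)
        (hd.2.1.trace_mul_conjTranspose_mul_self_nonneg Adnᴴ)
  exact sub_nonneg.mp (hholes ▸ hnonneg)

end CAR

theorem electron_density_conserved (Aup Adn : M4) (hCAR : CAR Aup Adn)
    (mu h lam gam : ℝ)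
    (d : ℝ → M4) (hd : SelfConsistent Aup Adn mu h lam gam d) :
    ∃ r : ℝ, (0 : ℝ) ≤ r ∧ r ≤ 2 ∧
      ∀ t : ℝ, (d t * (Aupᴴ * Aup + Adnᴴ * Adn)).trace = (r : ℂ) := by
  set n₀ := (d 0 * numberOp Aup Adn).trace
  have hconst : ∀ t, (d t * numberOp Aup Adn).trace = n₀ := fun t ↦
    is_const_of_deriv_eq_zero (fun s ↦ (hCAR.hasDerivAt_trace_mul_numberOp hd s).differentiableAt)
      (fun s ↦ (hCAR.hasDerivAt_trace_mul_numberOp hd s).deriv) t 0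
  have h0 : 0 ≤ n₀ := trace_mul_numberOp_nonneg (hd.1 0).2.1
  have h2 : n₀ ≤ 2 := hCAR.trace_mul_numberOp_le_two (hd.1 0)
  have hreal : n₀ = n₀.re := Complex.eq_re_of_ofReal_le (by rwa [Complex.ofReal_zero])
  refine ⟨n₀.re, ?_, ?_, fun t ↦ (hconst t).trans hreal⟩
  · exact_mod_cast hreal ▸ h0
  · exact_mod_cast hreal ▸ h2
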